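/- For every real x > −1, e^{x²/2} ∫_x^∞ e^{−t²/2} dt ≤ 4 / (3x + √(x² + 8)). -/

import Mathlib

open Real MeasureTheory Set Filter

noncomputable def gf (t : ℝ) : ℝ := Real.exp (-t ^ 2 / 2)

lemma gf_integrable : Integrable gf := by
  have : Integrable (fun t : ℝ => Real.exp (-(1/2 : ℝ) * t ^ 2)) :=
    integrable_exp_neg_mul_sq (by norm_num)
  refine this.congr (Filter.Eventually.of_forall fun t => ?_)
  unfold gf; ring_nf

lemma gf_cont : Continuous gf := by
  unfold gf; fun_prop

noncomputable def Tl (x : ℝ) : ℝ := ∫ t in Set.Ici x, gf t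

lemma Tl_eq (x : ℝ) : Tl x = Tl 0 - ∫ t in (0:ℝ)..x, gf t := by
  have h1 : ∀ y : ℝ, Tl y = (∫ t, gf t) - ∫ t in Set.Iic y, gf t := by
    intro y
    rw [Tl, MeasureTheory.integral_Ici_eq_integral_Ioi,
      ← intervalIntegral.integral_Iic_add_Ioi (gf_integrable.integrableOn) (gf_integrable.integrableOn)]
    ring
  rw [h1, h1, ← intervalIntegral.integral_Iic_sub_Iic (gf_integrable.integrableOn) (gf_integrable.integrableOn)]
  ring

lemma Tl_hasDeriv (x : ℝ) : HasDerivAt Tl (-gf x) x := by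
  have h : HasDerivAt (fun u => ∫ t in (0:ℝ)..u, gf t) (gf x) x :=
    intervalIntegral.integral_hasDerivAt_right
      gf_integrable.intervalIntegrable
      (gf_cont.stronglyMeasurableAtFilter _ _) gf_cont.continuousAt
  have := (hasDerivAt_const x (Tl 0)).sub h
  exact (this.congr_of_eventuallyEq (Filter.Eventually.of_forall Tl_eq)).congr_deriv (zero_sub _)

lemma Tl_tendsto : Tendsto Tl atTop (nhds 0) := by
  have h : Tendsto (fun x => ∫ t in (0:ℝ)..x, gf t) atTop (nhds (∫ t in Set.Ioi (0:ℝ), gf t)) :=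
    MeasureTheory.intervalIntegral_tendsto_integral_Ioi 0 gf_integrable.integrableOn tendsto_id
  have h0 : Tl 0 = ∫ t in Set.Ioi (0:ℝ), gf t := MeasureTheory.integral_Ici_eq_integral_Ioi
  have := (tendsto_const_nhds (x := Tl 0)).sub h
  simp only [h0, sub_self] at this
  refine this.congr fun x => (Tl_eq x).symm ▸ by rw [h0]

/-- the comparison function -/
noncomputable def gc (x : ℝ) : ℝ := 4 / (3 * x + Real.sqrt (x ^ 2 + 8)) * Real.exp (-x ^ 2 / 2)

lemma sq8_pos (x : ℝ) : (0:ℝ) < x ^ 2 + 8 := by positivity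

lemma sqrt_sq8 (x : ℝ) : Real.sqrt (x ^ 2 + 8) ^ 2 = x ^ 2 + 8 :=
  Real.sq_sqrt (sq8_pos x).le

lemma denom_pos {x : ℝ} (hx : -1 < x) : 0 < 3 * x + Real.sqrt (x ^ 2 + 8) := by
  have hs : Real.sqrt (x ^ 2 + 8) ^ 2 = x ^ 2 + 8 := sqrt_sq8 x
  have hs0 : 0 ≤ Real.sqrt (x ^ 2 + 8) := Real.sqrt_nonneg _
  nlinarith [sq_nonneg (x - 1), sq_nonneg (Real.sqrt (x ^ 2 + 8) - 3)]

lemma gc_hasDeriv {x : ℝ} (hx : -1 < x) :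
    HasDerivAt gc
      ((-4 * (3 + x / Real.sqrt (x ^ 2 + 8)) / (3 * x + Real.sqrt (x ^ 2 + 8)) ^ 2) *
          Real.exp (-x ^ 2 / 2) +
        4 / (3 * x + Real.sqrt (x ^ 2 + 8)) * (-x * Real.exp (-x ^ 2 / 2))) x := by
  have hs0 : 0 < Real.sqrt (x ^ 2 + 8) := Real.sqrt_pos.mpr (sq8_pos x)
  have hd : 0 < 3 * x + Real.sqrt (x ^ 2 + 8) := denom_pos hx
  have h1 : HasDerivAt (fun y : ℝ => y ^ 2 + 8) (2 * x) x := by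
    simpa using ((hasDerivAt_pow 2 x).add_const 8)
  have hsq : HasDerivAt (fun y : ℝ => Real.sqrt (y ^ 2 + 8)) (x / Real.sqrt (x ^ 2 + 8)) x := by
    have := (Real.hasDerivAt_sqrt (sq8_pos x).ne').comp x h1
    refine this.congr_deriv ?_
    field_simp
  have hden : HasDerivAt (fun y : ℝ => 3 * y + Real.sqrt (y ^ 2 + 8))
      (3 + x / Real.sqrt (x ^ 2 + 8)) x := by
    exact (((hasDerivAt_id x).const_mul 3).add hsq).congr_deriv (by simp)
  have hg : HasDerivAt (fun y : ℝ => 4 / (3 * y + Real.sqrt (y ^ 2 + 8)))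
      (-4 * (3 + x / Real.sqrt (x ^ 2 + 8)) / (3 * x + Real.sqrt (x ^ 2 + 8)) ^ 2) x := by
    have := (hasDerivAt_const x (4:ℝ)).div hden hd.ne'
    refine this.congr_deriv ?_
    ring
  have he : HasDerivAt (fun y : ℝ => Real.exp (-y ^ 2 / 2)) (-x * Real.exp (-x ^ 2 / 2)) x := by
    have h2 : HasDerivAt (fun y : ℝ => -y ^ 2 / 2) (-x) x := by
      have := (hasDerivAt_pow 2 x).neg.div_const 2
      refine this.congr_deriv ?_
      push_cast; ring
    refine ((Real.hasDerivAt_exp (-x ^ 2 / 2)).comp x h2).congr_deriv ?_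
    ring
  exact hg.mul he

lemma key_ineq {x : ℝ} (hx : -1 < x) :
    (-4 * (3 + x / Real.sqrt (x ^ 2 + 8)) / (3 * x + Real.sqrt (x ^ 2 + 8)) ^ 2) *
        Real.exp (-x ^ 2 / 2) +
      4 / (3 * x + Real.sqrt (x ^ 2 + 8)) * (-x * Real.exp (-x ^ 2 / 2)) + gf x ≤ 0 := by
  set s := Real.sqrt (x ^ 2 + 8) with hs
  have hs0 : 0 < s := Real.sqrt_pos.mpr (sq8_pos x)
  have hs2 : s ^ 2 = x ^ 2 + 8 := sqrt_sq8 x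
  have hd : 0 < 3 * x + s := denom_pos hx
  have he : 0 < Real.exp (-x ^ 2 / 2) := Real.exp_pos _
  have hx2 : (0:ℝ) < x ^ 2 + 2 := by positivity
  have hsq : (s * (x ^ 2 + 2)) ^ 2 = (x ^ 3 + 6 * x) ^ 2 + 32 := by
    have : (s * (x ^ 2 + 2)) ^ 2 = s ^ 2 * (x ^ 2 + 2) ^ 2 := by ring
    rw [this, hs2]; ring
  have key : x ^ 3 + 6 * x ≤ s * (x ^ 2 + 2) := by
    nlinarith [mul_pos hs0 hx2, hsq]
  set A := -4 * (3 + x / s) / (3 * x + s) ^ 2 + 4 / (3 * x + s) * (-x) + 1 with hA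
  have hc : (0:ℝ) < s * (3 * x + s) ^ 2 := by positivity
  have h5 : A * (s * (3 * x + s) ^ 2) = s ^ 3 + 2 * x * s ^ 2 - 3 * x ^ 2 * s - 12 * s - 4 * x := by
    rw [hA]; field_simp; ring
  have h6 : A * (s * (3 * x + s) ^ 2) = -(2 * (s * (x ^ 2 + 2) - (x ^ 3 + 6 * x))) := by
    rw [h5]; linear_combination (s + 2 * x) * hs2
  have main : A ≤ 0 := by
    have h7 : A * (s * (3 * x + s) ^ 2) ≤ 0 * (s * (3 * x + s) ^ 2) := by
      rw [h6, zero_mul]; linarith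
    exact le_of_mul_le_mul_right h7 hc
  have : (-4 * (3 + x / s) / (3 * x + s) ^ 2) * Real.exp (-x ^ 2 / 2) +
      4 / (3 * x + s) * (-x * Real.exp (-x ^ 2 / 2)) + gf x =
      A * Real.exp (-x ^ 2 / 2) := by
    rw [hA]; unfold gf; ring
  rw [this]
  exact mul_nonpos_of_nonpos_of_nonneg main he.le

lemma gc_tendsto : Tendsto gc atTop (nhds 0) := by
  have h1 : Tendsto (fun x : ℝ => 3 * x + Real.sqrt (x ^ 2 + 8)) atTop atTop := by
    refine tendsto_atTop_mono (fun x => ?_) ((tendsto_id.const_mul_atTop (by norm_num : (0:ℝ) < 3)))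
    have := Real.sqrt_nonneg (x ^ 2 + 8)
    simp only [id_eq]; linarith
  have h2 : Tendsto (fun x : ℝ => 4 / (3 * x + Real.sqrt (x ^ 2 + 8))) atTop (nhds 0) :=
    Tendsto.div_atTop tendsto_const_nhds h1
  have h3 : Tendsto (fun x : ℝ => Real.exp (-x ^ 2 / 2)) atTop (nhds 0) := by
    apply Real.tendsto_exp_atBot.comp
    apply Filter.Tendsto.atBot_div_const (by norm_num : (0:ℝ) < 2)
    exact tendsto_neg_atBot_iff.mpr (tendsto_pow_atTop (by norm_num))
  have := h2.mul h3
  rw [mul_zero] at this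
  exact this

theorem gaussian_tail_upper_bound (x : ℝ) (hx : -1 < x) :
    Real.exp (x ^ 2 / 2) * (∫ t in Set.Ici x, Real.exp (-t ^ 2 / 2)) ≤
      4 / (3 * x + Real.sqrt (x ^ 2 + 8)) := by
  set h : ℝ → ℝ := fun y => gc y - Tl y with hh
  have hderiv : ∀ y ∈ Set.Ici x, HasDerivAt h
      ((-4 * (3 + y / Real.sqrt (y ^ 2 + 8)) / (3 * y + Real.sqrt (y ^ 2 + 8)) ^ 2) *
          Real.exp (-y ^ 2 / 2) +
        4 / (3 * y + Real.sqrt (y ^ 2 + 8)) * (-y * Real.exp (-y ^ 2 / 2)) + gf y) y := by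
    intro y hy
    have hy1 : -1 < y := lt_of_lt_of_le hx hy
    have := (gc_hasDeriv hy1).sub (Tl_hasDeriv y)
    refine this.congr_deriv ?_
    ring
  have hanti : AntitoneOn h (Set.Ici x) := by
    apply antitoneOn_of_deriv_nonpos (convex_Ici x)
    · exact fun y hy => ((hderiv y hy).continuousAt.continuousWithinAt)
    · intro y hy
      rw [interior_Ici] at hy
      exact ((hderiv y (Set.mem_Ici.mpr (Set.mem_Ioi.mp hy).le)).differentiableAt).differentiableWithinAt
    · intro y hy
      rw [interior_Ici] at hy
      rw [(hderiv y (Set.mem_Ici.mpr (Set.mem_Ioi.mp hy).le)).deriv]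
      exact key_ineq (lt_of_lt_of_le hx hy.le)
  have hlim : Tendsto h atTop (nhds 0) := by
    simpa using gc_tendsto.sub Tl_tendsto
  have hge : 0 ≤ h x := by
    refine le_of_tendsto hlim ?_
    filter_upwards [eventually_ge_atTop x] with y hy
    exact hanti (Set.self_mem_Ici) hy hy
  have hT : Tl x ≤ gc x := by simpa [hh] using hge
  have he : 0 < Real.exp (x ^ 2 / 2) := Real.exp_pos _
  have hmul : Real.exp (x ^ 2 / 2) * Real.exp (-x ^ 2 / 2) = 1 := by
    rw [← Real.exp_add]; ring_nf; exact Real.exp_zero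
  have : Real.exp (x ^ 2 / 2) * Tl x ≤ Real.exp (x ^ 2 / 2) * gc x :=
    mul_le_mul_of_nonneg_left hT he.le
  calc Real.exp (x ^ 2 / 2) * (∫ t in Set.Ici x, Real.exp (-t ^ 2 / 2))
      = Real.exp (x ^ 2 / 2) * Tl x := by rfl
    _ ≤ Real.exp (x ^ 2 / 2) * gc x := this
    _ = 4 / (3 * x + Real.sqrt (x ^ 2 + 8)) := by
        unfold gc; rw [mul_comm (4 / _) _, ← mul_assoc, hmul, one_mul]
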